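/- arXiv:2109.04384 — 3 statements merged into one kernel-verified Lean document; each statement's English description precedes it below -/
import Mathlib

section
/- For every r⁰ ∈ ℝ³ and every s ∈ ℝ, the rotated point Rot_s(r⁰) belongs both to the closure of the forward reachable set cl C₊(r⁰) and to the closure of the backward reachable set cl C₋(r⁰). -/
/-!
Under a constant control the system is affine, `r' = L r + b` with
`L = driftLin + (2κu) • rotGen`, so it moves along `t ↦ p + exp (t • L) (r⁰ - p)` around the
equilibrium `p` of `L r + b`. With `u = s / (2κτ)` and time `τ` the exponent becomes
`τ • driftLin + s • rotGen`, and for `s ≠ 0` the equilibrium tends to `0` as `τ → 0`, so the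
endpoint tends to `exp (s • rotGen) r⁰ = Rot s r⁰` (Rodrigues' formula, since `rotGen³ = -rotGen`).
For `τ < 0` the endpoint is a point from which the same control, applied for time `-τ`, leads back
to `r⁰`; these points approach `Rot s r⁰` as well.
-/

open MeasureTheory Set

noncomputable section

/-- The state space: Bloch vectors in `ℝ³` with the Euclidean norm. -/
abbrev Pt := EuclideanSpace ℝ (Fin 3)

/-- The drift vector field `f₀`. -/
def f0 (ω γ : ℝ) (r : Pt) : Pt :=
  WithLp.toLp 2 ![-r 1 - (γ / (2 * ω)) * r 0, r 0 - (γ / (2 * ω)) * r 1, (γ / ω) * (1 - r 2)]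

/-- The coherent-control vector field `f₁` (infinitesimal rotation about the `r_x`-axis). -/
def f1 (r : Pt) : Pt := WithLp.toLp 2 ![0, -r 2, r 1]

/-- The incoherent-control vector field `f₂`. -/
def f2 (r : Pt) : Pt := WithLp.toLp 2 ![-r 0 / 2, -r 1 / 2, -r 2]

/-- Velocity of the system with only coherent control `u`. -/
def velC (ω κ γ : ℝ) (u : ℝ → ℝ) (r : ℝ → Pt) (t : ℝ) : Pt :=
  ω • f0 ω γ (r t) + (2 * κ * u t) • f1 (r t)

/-- Forward reachable set `C₊(r⁰)` using only coherent control: endpoints of absolutely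
continuous trajectories, encoded via the integral equation with integrable right-hand side. -/
def reachC (ω κ γ : ℝ) (r0 : Pt) : Set Pt :=
  {r1 | ∃ (T : ℝ) (u : ℝ → ℝ) (r : ℝ → Pt), 0 ≤ T ∧
    IntegrableOn u (Icc 0 T) ∧
    IntervalIntegrable (velC ω κ γ u r) volume 0 T ∧
    (∀ t ∈ Icc 0 T, r t = r0 + ∫ s in (0:ℝ)..t, velC ω κ γ u r s) ∧
    r T = r1}

/-- Backward reachable set `C₋(r¹)` using only coherent control. -/
def reachCneg (ω κ γ : ℝ) (r1 : Pt) : Set Pt := {p | r1 ∈ reachC ω κ γ p}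

/-- Rotation by angle `s` about the `r_x`-axis. -/
def Rot (s : ℝ) (r : Pt) : Pt :=
  WithLp.toLp 2 ![r 0, r 1 * Real.cos s - r 2 * Real.sin s, r 1 * Real.sin s + r 2 * Real.cos s]

open NormedSpace Filter Topology

theorem exp_mul_exp_neg {𝔸 : Type*} [NormedRing 𝔸] [NormedAlgebra ℚ 𝔸] [CompleteSpace 𝔸]
    (a : 𝔸) : exp a * exp (-a) = 1 := by
  rw [← exp_add_of_commute (Commute.neg_right (Commute.refl a)), add_neg_cancel, exp_zero]

section BanachAlgebra

variable {𝔸 : Type*} [NormedRing 𝔸] [NormedAlgebra ℝ 𝔸] [NormedAlgebra ℚ 𝔸] [CompleteSpace 𝔸]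

theorem eq_exp_smul_of_hasDerivAt {a : 𝔸} {R : ℝ → 𝔸} (hR : ∀ t, HasDerivAt R (a * R t) t)
    (h0 : R 0 = 1) (s : ℝ) : R s = exp (s • a) := by
  have hconst : ∀ t, HasDerivAt (fun t => exp (t • -a) * R t) 0 t := by
    intro t
    have hcomm : Commute (exp (t • -a)) a := (((Commute.refl a).neg_left).smul_left t).exp_left
    refine ((hasDerivAt_exp_smul_const' (𝕂 := ℝ) (-a) t).mul (hR t)).congr_deriv ?_
    rw [← mul_assoc, hcomm.eq, neg_mul, neg_mul, neg_add_cancel]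
  have h := is_const_of_deriv_eq_zero (fun t => (hconst t).differentiableAt)
    (fun t => (hconst t).deriv) s 0
  simp only [zero_smul, neg_zero, exp_zero, h0, mul_one, smul_neg] at h
  calc R s = exp (s • a) * (exp (-(s • a)) * R s) := by
        rw [← mul_assoc, exp_mul_exp_neg, one_mul]
    _ = exp (s • a) := by rw [h, mul_one]

theorem exp_smul_of_pow_three_eq_neg {a : 𝔸} (ha : a ^ 3 = -a) (s : ℝ) :
    exp (s • a) = 1 + Real.sin s • a + (1 - Real.cos s) • a ^ 2 := by
  refine (eq_exp_smul_of_hasDerivAt (R := fun t => 1 + Real.sin t • a + (1 - Real.cos t) • a ^ 2)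
    (fun t => ?_) (by simp) s).symm
  refine ((((Real.hasDerivAt_sin t).smul_const a).const_add 1).add
    (((Real.hasDerivAt_cos t).const_sub 1).smul_const (a ^ 2))).congr_deriv ?_
  have ha3 : a * a ^ 2 = -a := by rw [← pow_succ', ha]
  rw [mul_add, mul_add, mul_one, mul_smul_comm, mul_smul_comm, ← sq, ha3, sub_smul]
  module

end BanachAlgebra

section AffineFlow

variable {E : Type*} [NormedAddCommGroup E] [NormedSpace ℝ E] [CompleteSpace E]

theorem hasDerivAt_add_exp_smul_apply (L : E →L[ℝ] E) (p x : E) (t : ℝ) :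
    HasDerivAt (fun t : ℝ => p + exp (t • L) (x - p)) (L (exp (t • L) (x - p))) t :=
  ((hasDerivAt_exp_smul_const' (𝕂 := ℝ) L t).clm_apply (hasDerivAt_const t (x - p))).const_add p
    |>.congr_deriv (by simp)

theorem add_exp_neg_apply_add_exp_apply [NormedAlgebra ℚ (E →L[ℝ] E)] (N : E →L[ℝ] E)
    (p x : E) : p + exp (-N) (p + exp N (x - p) - p) = x := by
  have h := exp_mul_exp_neg (-N)
  rw [neg_neg] at h
  rw [add_sub_cancel_left, ← mul_apply_eq_comp, h, one_apply_eq_self, add_sub_cancel]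

end AffineFlow

instance : NormedAlgebra ℚ (Pt →L[ℝ] Pt) := NormedAlgebra.restrictScalars ℚ ℝ _

/-- `rw [zero_smul]` and `simp` miss `(0 : ℝ) • L` on operators of `Pt`: the `SMul` of the
`Module` instance they find is not reducibly the one of `ContinuousLinearMap`. -/
theorem ptCLM_zero_smul (L : Pt →L[ℝ] Pt) : (0 : ℝ) • L = 0 := zero_smul ℝ L

def rotGen : Pt →L[ℝ] Pt := LinearMap.toContinuousLinearMap
  { toFun := f1
    map_add' := by intro x y; ext i; fin_cases i <;> simp [f1]; ring
    map_smul' := by intro c x; ext i; fin_cases i <;> simp [f1] }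

theorem rotGen_apply (r : Pt) : rotGen r = f1 r := rfl

theorem rotGen_pow_three : rotGen ^ 3 = -rotGen := by
  ext r i
  fin_cases i <;> simp [pow_succ, rotGen_apply, f1]

theorem exp_smul_rotGen_apply (s : ℝ) (r : Pt) : exp (s • rotGen) r = Rot s r := by
  rw [exp_smul_of_pow_three_eq_neg rotGen_pow_three]
  ext i
  fin_cases i <;> simp [sq, rotGen_apply, f1, Rot] <;> ring

def driftLin (ω γ : ℝ) : Pt →L[ℝ] Pt := LinearMap.toContinuousLinearMap
  { toFun := fun r => WithLp.toLp 2 ![-ω * r 1 - γ / 2 * r 0, ω * r 0 - γ / 2 * r 1, -γ * r 2]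
    map_add' := by intro x y; ext i; fin_cases i <;> simp <;> ring
    map_smul' := by intro c x; ext i; fin_cases i <;> simp <;> ring }

def driftConst (γ : ℝ) : Pt := WithLp.toLp 2 ![0, 0, γ]

theorem velC_const {ω : ℝ} (hω : ω ≠ 0) (κ γ c : ℝ) (r : ℝ → Pt) (t : ℝ) :
    velC ω κ γ (fun _ => c) r t = (driftLin ω γ + (2 * κ * c) • rotGen) (r t) + driftConst γ := by
  ext i
  fin_cases i <;> simp [velC, f0, f1, driftLin, driftConst, rotGen_apply] <;> field_simp; ring

def equilibrium (ω γ s τ : ℝ) : Pt :=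
  (((γ / 2) ^ 2 + ω ^ 2) * τ ^ 2 + s ^ 2 / 2)⁻¹ •
    WithLp.toLp 2 ![ω * s * τ, -(γ / 2) * s * τ, ((γ / 2) ^ 2 + ω ^ 2) * τ ^ 2]

theorem equilibrium_zero (ω γ s : ℝ) : equilibrium ω γ s 0 = 0 := by
  simp [equilibrium]

theorem apply_equilibrium {ω : ℝ} (hω : ω ≠ 0) (γ s : ℝ) {τ : ℝ} (hτ : τ ≠ 0) :
    (τ • driftLin ω γ + s • rotGen) (equilibrium ω γ s τ) = -(τ • driftConst γ) := by
  have hk : (((γ / 2) ^ 2 + ω ^ 2) * τ ^ 2 + s ^ 2 / 2)⁻¹ *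
      (((γ / 2) ^ 2 + ω ^ 2) * τ ^ 2 + s ^ 2 / 2) = 1 := inv_mul_cancel₀ (by positivity)
  unfold equilibrium
  generalize (((γ / 2) ^ 2 + ω ^ 2) * τ ^ 2 + s ^ 2 / 2)⁻¹ = k at hk ⊢
  ext i
  fin_cases i <;> simp [driftLin, driftConst, rotGen_apply, f1, -mul_eq_zero]
  · ring
  · ring
  · linear_combination (-(τ * γ)) * hk

theorem continuous_equilibrium {ω : ℝ} (hω : ω ≠ 0) (γ : ℝ) {s : ℝ} (hs : s ≠ 0) :
    Continuous (equilibrium ω γ s) := by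
  have hD : ∀ τ, ((γ / 2) ^ 2 + ω ^ 2) * τ ^ 2 + s ^ 2 / 2 ≠ 0 := fun τ => by positivity
  unfold equilibrium
  fun_prop (disch := exact hD _)

theorem mem_reachC_of_hasDerivAt {ω κ γ T : ℝ} {u : ℝ → ℝ} {r : ℝ → Pt} (hT : 0 ≤ T)
    (hu : IntegrableOn u (Icc 0 T)) (hv : Continuous (velC ω κ γ u r))
    (hr : ∀ t, HasDerivAt r (velC ω κ γ u r t) t) : r T ∈ reachC ω κ γ (r 0) :=
  ⟨T, u, r, hT, hu, hv.intervalIntegrable 0 T, fun t _ => by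
    rw [intervalIntegral.integral_eq_sub_of_hasDerivAt (fun s _ => hr s)
      (hv.intervalIntegrable 0 t), add_sub_cancel], rfl⟩

theorem self_mem_reachC (ω κ γ : ℝ) (x : Pt) : x ∈ reachC ω κ γ x :=
  ⟨0, 0, fun _ => x, le_rfl, integrableOn_zero, IntervalIntegrable.refl, fun t ht => by
    rw [Icc_self, mem_singleton_iff] at ht
    simp [ht], rfl⟩

theorem add_exp_apply_mem_reachC {ω κ : ℝ} (hω : ω ≠ 0) (hκ : κ ≠ 0) (γ : ℝ) {τ : ℝ}
    (hτ : 0 < τ) (s : ℝ) {p : Pt}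
    (hp : (τ • driftLin ω γ + s • rotGen) p = -(τ • driftConst γ)) (x : Pt) :
    p + exp (τ • driftLin ω γ + s • rotGen) (x - p) ∈ reachC ω κ γ x := by
  set c := s / (2 * κ * τ) with hc
  set L := driftLin ω γ + (2 * κ * c) • rotGen
  have hL : τ • L = τ • driftLin ω γ + s • rotGen := by
    rw [smul_add, smul_smul, hc]
    congr 2
    field_simp
  have hLp : L p = -driftConst γ := smul_right_injective Pt hτ.ne'
    (show τ • L p = τ • -driftConst γ by rw [← smul_apply, hL, hp, smul_neg])
  set r : ℝ → Pt := fun t => p + exp (t • L) (x - p)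
  have hvel : velC ω κ γ (fun _ => c) r = fun t => L (r t) + driftConst γ :=
    funext (velC_const hω κ γ c r)
  have hr : ∀ t, HasDerivAt r (velC ω κ γ (fun _ => c) r t) t := fun t =>
    (hasDerivAt_add_exp_smul_apply L p x t).congr_deriv
      (by simp only [hvel, r, map_add, hLp]; abel)
  have hcont : Continuous (velC ω κ γ (fun _ => c) r) := by
    rw [hvel]
    exact (L.continuous.comp (continuous_iff_continuousAt.2 fun t => (hr t).continuousAt)).add
      continuous_const
  have hr0 : r 0 = x := by
    simp only [r, ptCLM_zero_smul, exp_zero, one_apply_eq_self, add_sub_cancel]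
  have hrτ : r τ = p + exp (τ • driftLin ω γ + s • rotGen) (x - p) := by simp only [r, hL]
  rw [← hrτ, ← hr0]
  exact mem_reachC_of_hasDerivAt hτ.le (integrableOn_const measure_Icc_lt_top.ne) hcont hr

def endpoint (ω γ s τ : ℝ) (x : Pt) : Pt :=
  equilibrium ω γ s τ + exp (τ • driftLin ω γ + s • rotGen) (x - equilibrium ω γ s τ)

theorem tendsto_endpoint {ω : ℝ} (hω : ω ≠ 0) (γ : ℝ) {s : ℝ} (hs : s ≠ 0) (x : Pt) :
    Tendsto (fun τ => endpoint ω γ s τ x) (𝓝 0) (𝓝 (Rot s x)) := by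
  have hq := continuous_equilibrium hω γ hs
  have hcont : Continuous fun τ => endpoint ω γ s τ x := by unfold endpoint; fun_prop
  simpa only [endpoint, equilibrium_zero, ptCLM_zero_smul, zero_add, sub_zero,
    exp_smul_rotGen_apply] using hcont.tendsto 0

theorem endpoint_mem_reachC {ω κ : ℝ} (hω : ω ≠ 0) (hκ : κ ≠ 0) (γ s : ℝ) {τ : ℝ} (hτ : 0 < τ)
    (x : Pt) : endpoint ω γ s τ x ∈ reachC ω κ γ x :=
  add_exp_apply_mem_reachC hω hκ γ hτ s (apply_equilibrium hω γ s hτ.ne') x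

theorem endpoint_mem_reachCneg {ω κ : ℝ} (hω : ω ≠ 0) (hκ : κ ≠ 0) (γ s : ℝ) {τ : ℝ}
    (hτ : τ < 0) (x : Pt) : endpoint ω γ s τ x ∈ reachCneg ω κ γ x := by
  set N := τ • driftLin ω γ + s • rotGen
  have hN : (-τ) • driftLin ω γ + (-s) • rotGen = -N := by
    ext1 y
    simp only [N, add_apply, smul_apply, neg_apply, neg_smul, neg_add]
  have hp : ((-τ) • driftLin ω γ + (-s) • rotGen) (equilibrium ω γ s τ) =
      -((-τ) • driftConst γ) := by
    rw [hN, neg_apply, apply_equilibrium hω γ s hτ.ne, neg_smul]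
  have h := add_exp_apply_mem_reachC hω hκ γ (neg_pos.2 hτ) (-s) hp (endpoint ω γ s τ x)
  rwa [hN, endpoint, add_exp_neg_apply_add_exp_apply] at h

theorem rot_mem_closure_reach_general (ω κ γ : ℝ) (hω : 0 < ω) (hκ : 0 < κ)
    (r0 : Pt) (s : ℝ) :
    Rot s r0 ∈ closure (reachC ω κ γ r0) ∧ Rot s r0 ∈ closure (reachCneg ω κ γ r0) := by
  rcases eq_or_ne s 0 with rfl | hs
  · rw [← exp_smul_rotGen_apply, ptCLM_zero_smul, exp_zero, one_apply_eq_self]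
    exact ⟨subset_closure (self_mem_reachC ω κ γ r0), subset_closure (self_mem_reachC ω κ γ r0)⟩
  have hlim := tendsto_endpoint hω.ne' γ hs r0
  constructor
  · refine mem_closure_of_tendsto (hlim.mono_left (nhdsWithin_le_nhds (s := Ioi 0))) ?_
    filter_upwards [self_mem_nhdsWithin] with τ hτ
      using endpoint_mem_reachC hω.ne' hκ.ne' γ s hτ r0
  · refine mem_closure_of_tendsto (hlim.mono_left (nhdsWithin_le_nhds (s := Iio 0))) ?_
    filter_upwards [self_mem_nhdsWithin] with τ hτ
      using endpoint_mem_reachCneg hω.ne' hκ.ne' γ s hτ r0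

/-- Every rotation of `r⁰` about the `r_x`-axis is both asymptotically forward reachable and
asymptotically backward reachable from `r⁰`. -/
theorem rot_mem_closure_reach (ω κ γ : ℝ) (hω : 0 < ω) (hκ : 0 < κ) (hγ : 0 ≤ γ)
    (r0 : Pt) (s : ℝ) :
    Rot s r0 ∈ closure (reachC ω κ γ r0) ∧ Rot s r0 ∈ closure (reachCneg ω κ γ r0) :=
  rot_mem_closure_reach_general ω κ γ hω hκ r0 s
end
end

section
/- The control system has full rank everywhere: if γ > 0, then for every r ∈ ℝ³ the linear span of the vectors f₀(r), f₁(r), f₃(r), f₄(r), f₅(r), f₆(r), f₇(r) is all of ℝ³. -/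
open MeasureTheory Set

noncomputable section

/-- Lie bracket of vector fields on `ℝ³`: `[f,g](r) = Df(r)·g(r) − Dg(r)·f(r)`. -/
def lieB (f g : Pt → Pt) (r : Pt) : Pt := fderiv ℝ f r (g r) - fderiv ℝ g r (f r)

/-!
All the fields involved are affine, `r ↦ A r + c`, and the bracket of two affine fields is again
affine, with matrix `A B - B A` and constant `A b - B a`. So `f₃, …, f₆` and `[f₁, f₆] = -f₇` are
computed by `3 × 3` matrix algebra. To see that these fields span, let `w = (a, b, c)` be orthogonal
to `f₁, f₃, …, f₇` at `r = (x, y, z)` and put `k = γ / (2ω) ≠ 0`. The combinations `f₃ + f₆` and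
`f₇ - f₅`, together with `f₁`, give `z b = y c = 0` and `y b = z c`, which reduce
`b ⟪f₃, w⟫ + c ⟪f₅, w⟫ = 0` to `2k (b² + c²) = 0`; then `⟪f₃, w⟫` and `⟪f₄, w⟫` force `4k a = 0`.
-/

open scoped RealInnerProductSpace

theorem Submodule.span_eq_top_of_forall_inner_eq_zero {E : Type*} [NormedAddCommGroup E]
    [InnerProductSpace ℝ E] [FiniteDimensional ℝ E] {s : Set E}
    (h : ∀ w, (∀ v ∈ s, ⟪v, w⟫ = 0) → w = 0) : Submodule.span ℝ s = ⊤ := by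
  rw [← Submodule.orthogonal_eq_bot_iff, Submodule.eq_bot_iff]
  exact fun w hw ↦ h w fun v hv ↦ (Submodule.mem_orthogonal _ w).1 hw v (Submodule.subset_span hv)

theorem lieB_swap (f g : Pt → Pt) : lieB g f = -lieB f g := by
  funext r
  simp only [lieB, Pi.neg_apply, neg_sub]

theorem lieB_neg_right (f g : Pt → Pt) : lieB f (-g) = -lieB f g := by
  funext r
  simp only [lieB, fderiv_neg, Pi.neg_apply, map_neg, neg_apply]
  abel

section AffineField

variable {n : Type*} [Fintype n] [DecidableEq n]

def affineField (A : Matrix n n ℝ) (c r : EuclideanSpace ℝ n) : EuclideanSpace ℝ n :=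
  Matrix.toEuclideanCLM (𝕜 := ℝ) A r + c

theorem hasFDerivAt_affineField (A : Matrix n n ℝ) (c r : EuclideanSpace ℝ n) :
    HasFDerivAt (affineField A c) (Matrix.toEuclideanCLM (𝕜 := ℝ) A) r :=
  (Matrix.toEuclideanCLM (𝕜 := ℝ) A).hasFDerivAt.add_const c

end AffineField

theorem lieB_affineField (A B : Matrix (Fin 3) (Fin 3) ℝ) (a b : Pt) :
    lieB (affineField A a) (affineField B b) =
      affineField (A * B - B * A)
        (Matrix.toEuclideanCLM (𝕜 := ℝ) A b - Matrix.toEuclideanCLM (𝕜 := ℝ) B a) := by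
  funext r
  simp only [lieB, (hasFDerivAt_affineField _ _ _).fderiv, affineField, map_add, map_sub,
    map_mul, mul_apply_eq_comp, sub_apply]
  abel

theorem affineField_fin_three (a₁₁ a₁₂ a₁₃ a₂₁ a₂₂ a₂₃ a₃₁ a₃₂ a₃₃ c₁ c₂ c₃ : ℝ) (r : Pt) :
    affineField !![a₁₁, a₁₂, a₁₃; a₂₁, a₂₂, a₂₃; a₃₁, a₃₂, a₃₃] !₂[c₁, c₂, c₃] r =
      !₂[a₁₁ * r 0 + a₁₂ * r 1 + a₁₃ * r 2 + c₁, a₂₁ * r 0 + a₂₂ * r 1 + a₂₃ * r 2 + c₂,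
        a₃₁ * r 0 + a₃₂ * r 1 + a₃₃ * r 2 + c₃] := by
  ext i
  fin_cases i <;> simp [affineField, Matrix.mulVec, dotProduct, Fin.sum_univ_three]

theorem inner_toLp_fin_three (v₀ v₁ v₂ : ℝ) (w : Pt) :
    ⟪!₂[v₀, v₁, v₂], w⟫ = v₀ * w 0 + v₁ * w 1 + v₂ * w 2 := by
  simp [PiLp.inner_apply, Fin.sum_univ_three, mul_comm]

def driftField (k : ℝ) : Pt → Pt :=
  affineField !![-k, -1, 0; 1, -k, 0; 0, 0, -2 * k] !₂[0, 0, 2 * k]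

theorem f0_eq_driftField (ω γ : ℝ) : f0 ω γ = driftField (γ / (2 * ω)) := by
  funext r
  ext i
  fin_cases i <;>
    simp [f0, driftField, affineField, Matrix.mulVec, dotProduct, Fin.sum_univ_three] <;> ring

theorem f1_eq_affineField : f1 = affineField !![0, 0, 0; 0, 0, -1; 0, 1, 0] 0 := by
  funext r
  ext i
  fin_cases i <;> simp [f1, affineField, Matrix.mulVec, dotProduct, Fin.sum_univ_three]

section Brackets

variable (k : ℝ)

theorem lieB_driftField_f1 :
    lieB (driftField k) f1 = affineField !![0, 0, 1; 0, 0, -k; -1, -k, 0] !₂[0, 2 * k, 0] := by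
  rw [driftField, f1_eq_affineField, lieB_affineField]
  congr 1
  · ext i j
    fin_cases i <;> fin_cases j <;> simp <;> ring
  · ext i
    fin_cases i <;> simp

theorem lieB_driftField_lieB_driftField_f1 :
    lieB (driftField k) (lieB (driftField k) f1) =
      affineField !![0, 0, 2 * k; 0, 0, 1 - k ^ 2; 2 * k, k ^ 2 - 1, 0] !₂[-4 * k, 0, 0] := by
  rw [lieB_driftField_f1, driftField, lieB_affineField]
  congr 1
  · ext i j
    fin_cases i <;> fin_cases j <;> simp <;> ring
  · ext i
    fin_cases i <;> simp
    ring

theorem lieB_f1_lieB_driftField_f1 :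
    lieB f1 (lieB (driftField k) f1) =
      affineField !![0, -1, 0; 1, 2 * k, 0; 0, 0, -2 * k] !₂[0, 0, 2 * k] := by
  rw [lieB_driftField_f1, f1_eq_affineField, lieB_affineField]
  congr 1
  · ext i j
    fin_cases i <;> fin_cases j <;> simp <;> ring
  · ext i
    fin_cases i <;> simp

theorem lieB_f1_lieB_f1_lieB_driftField_f1 :
    lieB f1 (lieB f1 (lieB (driftField k) f1)) =
      affineField !![0, 0, -1; 0, 0, 4 * k; 1, 4 * k, 0] !₂[0, -2 * k, 0] := by
  rw [lieB_f1_lieB_driftField_f1, f1_eq_affineField, lieB_affineField]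
  congr 1
  · ext i j
    fin_cases i <;> fin_cases j <;> simp <;> ring
  · ext i
    fin_cases i <;> simp

theorem lieB_f1_lieB_f1_lieB_f1_lieB_driftField_f1 :
    lieB f1 (lieB f1 (lieB f1 (lieB (driftField k) f1))) =
      affineField !![0, 1, 0; -1, -8 * k, 0; 0, 0, 8 * k] !₂[0, 0, -2 * k] := by
  rw [lieB_f1_lieB_f1_lieB_driftField_f1, f1_eq_affineField, lieB_affineField]
  congr 1
  · ext i j
    fin_cases i <;> fin_cases j <;> simp <;> ring
  · ext i
    fin_cases i <;> simp

end Brackets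

-- `hᵢ` says that `(a, b, c)` is orthogonal to `fᵢ` at `(x, y, z)`, where `k = γ / (2ω)`.
theorem eq_zero_of_orthogonal_brackets {k x y z a b c : ℝ} (hk : k ≠ 0)
    (h₁ : -z * b + y * c = 0)
    (h₃ : z * a + (2 * k - k * z) * b - (x + k * y) * c = 0)
    (h₄ : (2 * k * z - 4 * k) * a + (1 - k ^ 2) * z * b + (2 * k * x + (k ^ 2 - 1) * y) * c = 0)
    (h₅ : -y * a + (x + 2 * k * y) * b + (2 * k - 2 * k * z) * c = 0)
    (h₆ : -z * a + (4 * k * z - 2 * k) * b + (x + 4 * k * y) * c = 0)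
    (h₇ : -y * a + (x + 8 * k * y) * b + (2 * k - 8 * k * z) * c = 0) :
    a = 0 ∧ b = 0 ∧ c = 0 := by
  have hzb : z * b = 0 := eq_zero_of_ne_zero_of_mul_left_eq_zero hk
    (by linear_combination (h₃ + h₆ - 3 * k * h₁) / 6)
  have hyc : y * c = 0 := eq_zero_of_ne_zero_of_mul_left_eq_zero hk
    (by linear_combination (h₃ + h₆ + 3 * k * h₁) / 6)
  have hyb : y * b - z * c = 0 := eq_zero_of_ne_zero_of_mul_left_eq_zero hk
    (by linear_combination (h₇ - h₅) / 6)
  have hbc : b ^ 2 + c ^ 2 = 0 := eq_zero_of_ne_zero_of_mul_left_eq_zero hk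
    (by linear_combination (b * h₃ + c * h₅ - (a - k * b) * hzb + (a + k * b) * hyc
      - 2 * k * c * hyb) / 2)
  have hb : b = 0 := by nlinarith [sq_nonneg b, sq_nonneg c]
  have hc : c = 0 := by nlinarith [sq_nonneg b, sq_nonneg c]
  subst hb hc
  exact ⟨eq_zero_of_ne_zero_of_mul_left_eq_zero hk (by linear_combination (2 * k * h₃ - h₄) / 4),
    rfl, rfl⟩

/-- The control system has full rank everywhere: the iterated Lie brackets
`f₀, f₁, f₃ = [f₀,f₁], f₄ = [f₀,f₃], f₅ = [f₁,f₃], f₆ = [f₁,f₅], f₇ = (ad f₁)⁴ f₀`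
span all of `ℝ³` at every point. -/
theorem full_rank (ω γ : ℝ) (hω : 0 < ω) (hγ : 0 < γ) (r : Pt) :
    Submodule.span ℝ
      ({f0 ω γ r, f1 r,
        lieB (f0 ω γ) f1 r,
        lieB (f0 ω γ) (lieB (f0 ω γ) f1) r,
        lieB f1 (lieB (f0 ω γ) f1) r,
        lieB f1 (lieB f1 (lieB (f0 ω γ) f1)) r,
        lieB f1 (lieB f1 (lieB f1 (lieB f1 (f0 ω γ)))) r} : Set Pt) = ⊤ := by
  have hk : γ / (2 * ω) ≠ 0 := by positivity
  rw [f0_eq_driftField]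
  generalize γ / (2 * ω) = k at hk ⊢
  rw [lieB_swap (driftField k) f1, lieB_neg_right, lieB_neg_right,
    lieB_neg_right, lieB_f1_lieB_f1_lieB_f1_lieB_driftField_f1,
    lieB_f1_lieB_f1_lieB_driftField_f1, lieB_f1_lieB_driftField_f1,
    lieB_driftField_lieB_driftField_f1, lieB_driftField_f1]
  refine Submodule.span_eq_top_of_forall_inner_eq_zero fun w hw ↦ ?_
  simp only [Set.mem_insert_iff, Set.mem_singleton_iff, forall_eq_or_imp, forall_eq, f1,
    affineField_fin_three, Pi.neg_apply, inner_neg_left, neg_eq_zero, inner_toLp_fin_three] at hw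
  obtain ⟨-, h₁, h₃, h₄, h₅, h₆, h₇⟩ := hw
  obtain ⟨ha, hb, hc⟩ := eq_zero_of_orthogonal_brackets (x := r 0) (y := r 1) (z := r 2)
    (a := w 0) (b := w 1) (c := w 2) hk
    (by linear_combination h₁) (by linear_combination h₃) (by linear_combination h₄)
    (by linear_combination h₅) (by linear_combination h₆) (by linear_combination -h₇)
  ext i
  fin_cases i <;> simp [ha, hb, hc]
end
end

section
/- The controlled velocity field points inward on the unit sphere: for every r ∈ ℝ³ with |r| = 1, every u ∈ ℝ, and every n ≥ 0, the Euclidean inner product ⟨r, ω f₀(r) + 2κ u f₁(r) + γ n f₂(r)⟩ is nonpositive. -/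
open MeasureTheory Set

noncomputable section

/-! The rotation field `f₁` is tangent to every sphere about the origin and `f₂` is a pure
contraction, so only the drift can push outward; but on the unit sphere, using
`r_x² + r_y² = 1 - r_z²`, its radial component is `-(γ/(2ω)) (1 - r_z)² ≤ 0`. -/

open RealInnerProductSpace

namespace Pt

lemma inner_eq (x y : Pt) : ⟪x, y⟫ = x 0 * y 0 + x 1 * y 1 + x 2 * y 2 := by
  simp only [PiLp.inner_apply, RCLike.inner_apply, conj_trivial, Fin.sum_univ_three]
  ring

lemma norm_sq_eq (x : Pt) : ‖x‖ ^ 2 = x 0 ^ 2 + x 1 ^ 2 + x 2 ^ 2 := by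
  rw [EuclideanSpace.real_norm_sq_eq, Fin.sum_univ_three]

end Pt

lemma inner_f0_self_of_norm_eq_one (ω γ : ℝ) {r : Pt} (hr : ‖r‖ = 1) :
    ⟪r, f0 ω γ r⟫ = -(γ / (2 * ω)) * (1 - r 2) ^ 2 := by
  have hsphere : r 0 ^ 2 + r 1 ^ 2 + r 2 ^ 2 = 1 := by rw [← Pt.norm_sq_eq, hr, one_pow]
  simp only [Pt.inner_eq, f0, Matrix.cons_val_zero, Matrix.cons_val_one,
    Matrix.cons_val_two, Matrix.head_cons, Matrix.tail_cons]
  linear_combination (-(γ / (2 * ω))) * hsphere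

lemma inner_f1_self (r : Pt) : ⟪r, f1 r⟫ = 0 := by
  simp only [Pt.inner_eq, f1, Matrix.cons_val_zero, Matrix.cons_val_one,
    Matrix.cons_val_two, Matrix.head_cons, Matrix.tail_cons]
  ring

lemma inner_f2_self (r : Pt) : ⟪r, f2 r⟫ = -(r 0 ^ 2 + r 1 ^ 2) / 2 - r 2 ^ 2 := by
  simp only [Pt.inner_eq, f2, Matrix.cons_val_zero, Matrix.cons_val_one,
    Matrix.cons_val_two, Matrix.head_cons, Matrix.tail_cons]
  ring

lemma inner_f2_self_nonpos (r : Pt) : ⟪r, f2 r⟫ ≤ 0 := by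
  rw [inner_f2_self]
  nlinarith [sq_nonneg (r 0), sq_nonneg (r 1), sq_nonneg (r 2)]

open RealInnerProductSpace in
theorem velocity_inward_on_sphere_general (ω κ γ : ℝ) (hω : 0 < ω) (hγ : 0 ≤ γ)
    (r : Pt) (hr : ‖r‖ = 1) (u n : ℝ) (hn : 0 ≤ n) :
    ⟪r, ω • f0 ω γ r + (2 * κ * u) • f1 r + (γ * n) • f2 r⟫ ≤ 0 := by
  rw [inner_add_right, inner_add_right, inner_smul_right, inner_smul_right, inner_smul_right,
    inner_f0_self_of_norm_eq_one ω γ hr, inner_f1_self, mul_zero, add_zero]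
  have hdrift : ω * (-(γ / (2 * ω)) * (1 - r 2) ^ 2) ≤ 0 :=
    mul_nonpos_of_nonneg_of_nonpos hω.le
      (mul_nonpos_of_nonpos_of_nonneg (neg_nonpos.mpr (by positivity)) (sq_nonneg _))
  have hdamping : γ * n * ⟪r, f2 r⟫ ≤ 0 :=
    mul_nonpos_of_nonneg_of_nonpos (mul_nonneg hγ hn) (inner_f2_self_nonpos r)
  exact add_nonpos hdrift hdamping

open RealInnerProductSpace in
/-- The controlled velocity field points inward on the unit sphere. -/
theorem velocity_inward_on_sphere (ω κ γ : ℝ) (hω : 0 < ω) (hκ : 0 < κ) (hγ : 0 ≤ γ)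
    (r : Pt) (hr : ‖r‖ = 1) (u n : ℝ) (hn : 0 ≤ n) :
    ⟪r, ω • f0 ω γ r + (2 * κ * u) • f1 r + (γ * n) • f2 r⟫ ≤ 0 :=
  velocity_inward_on_sphere_general ω κ γ hω hγ r hr u n hn
end
end
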